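/- Assume 0 ≤ p₁ ≤ 1, 0 ≤ p₂ ≤ 1, and |p₂ - p₁| < 1. Then the asymptotic expected capture fraction equals p^⊤ η*: the Cesàro averages (1/n) * ∑_{i=0}^{n-1} (p₁ * (η i 0) + p₂ * (η i 1)) converge, as n → ∞, to p₁ * η* 0 + p₂ * η* 1 = p₁ / (1 + p₁ - p₂). (Multiplying by 100 gives the paper's asymptotic capture percentage percentage(∞) = p^⊤ η* × 100.) -/

import Mathlib

open Matrix Filter

/-- Transition matrix of the two-state Markov chain:
row 0 = (1 - p₁, 1 - p₂), row 1 = (p₁, p₂). -/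
def M (p₁ p₂ : ℝ) : Matrix (Fin 2) (Fin 2) ℝ := !![1 - p₁, 1 - p₂; p₁, p₂]

/-- Initial distribution: defender at the target center. -/
def e₁ : Fin 2 → ℝ := ![1, 0]

/-- Distribution of the chain after `n` games when started in `S₁`. -/
def η (p₁ p₂ : ℝ) (n : ℕ) : Fin 2 → ℝ := (M p₁ p₂ ^ n) *ᵥ e₁

/-- The candidate stationary distribution. -/
noncomputable def ηstar (p₁ p₂ : ℝ) : Fin 2 → ℝ := ![(1 - p₂) / (1 + p₁ - p₂), p₁ / (1 + p₁ - p₂)]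

/-!
`M` has the eigenvalues `1` and `p₂ - p₁`, with eigenvectors `η*` and `(1, -1)`, and
`e₁ = η* + p₁ / (1 + p₁ - p₂) • (1, -1)`. Hence `η n = η* + (p₂ - p₁) ^ n • (e₁ - η*)` converges to
`η*` when `|p₂ - p₁| < 1`, so the single-game capture probabilities `p₁ η n 0 + p₂ η n 1` converge
to `p₁ η* 0 + p₂ η* 1`, and so do their Cesàro averages.
-/

variable {p₁ p₂ : ℝ}

lemma η_succ (n : ℕ) : η p₁ p₂ (n + 1) = M p₁ p₂ *ᵥ η p₁ p₂ n := by
  simp only [η, pow_succ', mulVec_mulVec]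

lemma M_mulVec_ηstar (hD : 1 + p₁ - p₂ ≠ 0) : M p₁ p₂ *ᵥ ηstar p₁ p₂ = ηstar p₁ p₂ := by
  ext i
  fin_cases i <;> simp [M, ηstar, mulVec, dotProduct, Fin.sum_univ_two] <;> field_simp <;> ring

lemma M_mulVec_one_neg_one : M p₁ p₂ *ᵥ ![1, -1] = (p₂ - p₁) • ![1, -1] := by
  ext i
  fin_cases i <;> simp [M, mulVec, dotProduct, Fin.sum_univ_two]; ring

lemma η_eq_ηstar_add (hD : 1 + p₁ - p₂ ≠ 0) (n : ℕ) :
    η p₁ p₂ n = ηstar p₁ p₂ + ((p₂ - p₁) ^ n * (p₁ / (1 + p₁ - p₂))) • ![1, -1] := by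
  induction n with
  | zero =>
    ext i
    fin_cases i <;> simp [η, e₁, ηstar]; field_simp; ring
  | succ n ih =>
    rw [η_succ, ih, mulVec_add, mulVec_smul, M_mulVec_ηstar hD, M_mulVec_one_neg_one, smul_smul,
      pow_succ]
    ring_nf

lemma tendsto_η_ηstar (h : |p₂ - p₁| < 1) : Tendsto (η p₁ p₂) atTop (nhds (ηstar p₁ p₂)) := by
  have hD : 1 + p₁ - p₂ ≠ 0 := by linarith [(abs_lt.1 h).2]
  have hcoeff : Tendsto (fun n : ℕ => (p₂ - p₁) ^ n * (p₁ / (1 + p₁ - p₂))) atTop (nhds 0) := by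
    simpa using (tendsto_pow_atTop_nhds_zero_of_abs_lt_one h).mul_const (p₁ / (1 + p₁ - p₂))
  rw [funext (η_eq_ηstar_add hD)]
  simpa using tendsto_const_nhds.add (hcoeff.smul_const (![1, -1] : Fin 2 → ℝ))

lemma capture_ηstar (hD : 1 + p₁ - p₂ ≠ 0) :
    p₁ * ηstar p₁ p₂ 0 + p₂ * ηstar p₁ p₂ 1 = p₁ / (1 + p₁ - p₂) := by
  simp only [ηstar, cons_val_zero, cons_val_one]
  field_simp
  ring

theorem asymptotic_capture_fraction_general (p₁ p₂ : ℝ) (h : |p₂ - p₁| < 1) :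
    p₁ * ηstar p₁ p₂ 0 + p₂ * ηstar p₁ p₂ 1 = p₁ / (1 + p₁ - p₂) ∧
      Tendsto
        (fun n : ℕ =>
          (1 / (n : ℝ)) * ∑ i ∈ Finset.range n, (p₁ * η p₁ p₂ i 0 + p₂ * η p₁ p₂ i 1))
        atTop (nhds (p₁ / (1 + p₁ - p₂))) := by
  have hD : 1 + p₁ - p₂ ≠ 0 := by linarith [(abs_lt.1 h).2]
  have hη := tendsto_pi_nhds.1 (tendsto_η_ηstar h)
  have hcapture : Tendsto (fun i => p₁ * η p₁ p₂ i 0 + p₂ * η p₁ p₂ i 1) atTop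
      (nhds (p₁ * ηstar p₁ p₂ 0 + p₂ * ηstar p₁ p₂ 1)) :=
    ((hη 0).const_mul p₁).add ((hη 1).const_mul p₂)
  rw [capture_ηstar hD] at hcapture
  exact ⟨capture_ηstar hD, by simpa only [one_div] using hcapture.cesaro⟩

theorem asymptotic_capture_fraction (p₁ p₂ : ℝ) (h₁ : 0 ≤ p₁) (h₁' : p₁ ≤ 1)
    (h₂ : 0 ≤ p₂) (h₂' : p₂ ≤ 1) (h : |p₂ - p₁| < 1) :
    p₁ * ηstar p₁ p₂ 0 + p₂ * ηstar p₁ p₂ 1 = p₁ / (1 + p₁ - p₂) ∧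
      Tendsto
        (fun n : ℕ =>
          (1 / (n : ℝ)) * ∑ i ∈ Finset.range n, (p₁ * η p₁ p₂ i 0 + p₂ * η p₁ p₂ i 1))
        atTop (nhds (p₁ / (1 + p₁ - p₂))) :=
  asymptotic_capture_fraction_general p₁ p₂ h
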